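/- Suppose 0 < q < 1, Λ(x) = I - (1-q)x·M(x) where M : ℝ → Matrix(Fin 2)(Fin 2)ℝ is continuous. Then for each fixed x, the sequence of ordered products Λ(x;q)ₙ = Λ(q^{n-1}x)···Λ(qx)Λ(x) converges as n → ∞. -/

import Mathlib

open Filter
attribute [local instance] Matrix.normedAddCommGroup Matrix.normedSpace

/-- Entrywise sup norm of a 2×2 matrix product bound. -/
lemma matrix_mul_norm_le (A B : Matrix (Fin 2) (Fin 2) ℝ) : ‖A * B‖ ≤ 2 * ‖A‖ * ‖B‖ := by
  rw [Matrix.norm_le_iff (by positivity)]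
  intro i j
  rw [Matrix.mul_apply]
  calc ‖∑ k, A i k * B k j‖ ≤ ∑ k, ‖A i k * B k j‖ := norm_sum_le _ _
    _ ≤ ∑ _k : Fin 2, ‖A‖ * ‖B‖ := by
        apply Finset.sum_le_sum
        intro k _
        rw [norm_mul]
        exact mul_le_mul (Matrix.norm_entry_le_entrywise_sup_norm A)
          (Matrix.norm_entry_le_entrywise_sup_norm B) (norm_nonneg _) (norm_nonneg _)
    _ = 2 * ‖A‖ * ‖B‖ := by
        simp [Finset.sum_const]
        ring

/-- For continuous M and Λ(x) = I - (1-q)x M(x), the ordered products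
Λ(q^{n-1}x)···Λ(x) converge as n → ∞. -/
theorem ordered_product_converges (q : ℝ) (hq0 : 0 < q) (hq1 : q < 1)
    (M : ℝ → Matrix (Fin 2) (Fin 2) ℝ) (hM : Continuous M)
    (Λ : ℝ → Matrix (Fin 2) (Fin 2) ℝ)
    (hΛ : ∀ y, Λ y = 1 - ((1 - q) * y) • M y)
    (x : ℝ) (P : ℕ → Matrix (Fin 2) (Fin 2) ℝ)
    (hP0 : P 0 = 1) (hPs : ∀ n, P (n + 1) = Λ (q ^ n * x) * P n) :
    ∃ L : Matrix (Fin 2) (Fin 2) ℝ, Filter.Tendsto P Filter.atTop (nhds L) := by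
  -- bound M on the compact ball of radius |x|
  obtain ⟨K, hK⟩ := (isCompact_closedBall (0:ℝ) |x|).exists_bound_of_continuousOn
    hM.continuousOn
  obtain ⟨K', hK'def⟩ : ∃ K', K' = max K 0 := ⟨_, rfl⟩
  have hK'0 : 0 ≤ K' := hK'def ▸ le_max_right _ _
  obtain ⟨c, hcdef⟩ : ∃ c, c = (1 - q) * |x| * K' := ⟨_, rfl⟩
  have hq1' : 0 < 1 - q := by linarith
  have hc0 : 0 ≤ c := by rw [hcdef]; positivity
  -- key bound on Λ(qⁿ x) - 1
  have hqn : ∀ n : ℕ, q ^ n * x ∈ Metric.closedBall (0:ℝ) |x| := by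
    intro n
    simp only [Metric.mem_closedBall, Real.dist_eq, sub_zero, abs_mul, abs_pow,
      abs_of_pos hq0]
    calc q ^ n * |x| ≤ 1 * |x| := by
          apply mul_le_mul_of_nonneg_right _ (abs_nonneg x)
          exact pow_le_one₀ hq0.le hq1.le
      _ = |x| := one_mul _
  have hΛn : ∀ n : ℕ, ‖Λ (q ^ n * x) - 1‖ ≤ c * q ^ n := by
    intro n
    have : Λ (q ^ n * x) - 1 = -(((1 - q) * (q ^ n * x)) • M (q ^ n * x)) := by
      rw [hΛ]; abel
    rw [this, norm_neg, norm_smul, Real.norm_eq_abs, abs_mul, abs_mul, abs_pow,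
      abs_of_pos hq0, abs_of_pos hq1']
    have hMb : ‖M (q ^ n * x)‖ ≤ K' := hK'def ▸ le_trans (hK _ (hqn n)) (le_max_left _ _)
    calc (1 - q) * (q ^ n * |x|) * ‖M (q ^ n * x)‖
        ≤ (1 - q) * (q ^ n * |x|) * K' := by
          apply mul_le_mul_of_nonneg_left hMb
          exact mul_nonneg hq1'.le (mul_nonneg (pow_pos hq0 n).le (abs_nonneg x))
      _ = c * q ^ n := by rw [hcdef]; ring
  -- rewrite recursion as additive perturbation
  have hstep : ∀ n, P (n + 1) = P n + (Λ (q ^ n * x) - 1) * P n := by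
    intro n
    rw [hPs n, sub_mul, one_mul]
    abel
  -- boundedness of P
  have hPsum : ∀ n, ‖P n‖ ≤ Real.exp (2 * c * ∑ i ∈ Finset.range n, q ^ i) := by
    intro n
    induction n with
    | zero => simp [hP0, Real.exp_nonneg]
    | succ n ih =>
        have h1 : ‖P (n + 1)‖ ≤ (1 + 2 * (c * q ^ n)) * ‖P n‖ := by
          rw [hstep n]
          calc ‖P n + (Λ (q ^ n * x) - 1) * P n‖
              ≤ ‖P n‖ + ‖(Λ (q ^ n * x) - 1) * P n‖ := norm_add_le _ _
            _ ≤ ‖P n‖ + 2 * ‖Λ (q ^ n * x) - 1‖ * ‖P n‖ := by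
                have := matrix_mul_norm_le (Λ (q ^ n * x) - 1) (P n)
                linarith
            _ ≤ ‖P n‖ + 2 * (c * q ^ n) * ‖P n‖ := by
                have h2 := hΛn n
                have h3 : (0:ℝ) ≤ ‖P n‖ := norm_nonneg _
                nlinarith
            _ = (1 + 2 * (c * q ^ n)) * ‖P n‖ := by ring
        have h2 : (1 + 2 * (c * q ^ n)) ≤ Real.exp (2 * (c * q ^ n)) := by
          have := Real.add_one_le_exp (2 * (c * q ^ n))
          linarith
        calc ‖P (n + 1)‖ ≤ (1 + 2 * (c * q ^ n)) * ‖P n‖ := h1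
          _ ≤ Real.exp (2 * (c * q ^ n)) * Real.exp (2 * c * ∑ i ∈ Finset.range n, q ^ i) := by
              apply mul_le_mul h2 ih (norm_nonneg _) (Real.exp_nonneg _)
          _ = Real.exp (2 * c * ∑ i ∈ Finset.range (n + 1), q ^ i) := by
              rw [← Real.exp_add, Finset.sum_range_succ]
              congr 1
              ring
  obtain ⟨B, hBdef⟩ : ∃ B, B = Real.exp (2 * c * (1 / (1 - q))) := ⟨_, rfl⟩
  have hPB : ∀ n, ‖P n‖ ≤ B := by
    intro n
    rw [hBdef]
    refine le_trans (hPsum n) (Real.exp_le_exp.mpr ?_)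
    apply mul_le_mul_of_nonneg_left _ (by linarith)
    have hgs : ∑ i ∈ Finset.range n, q ^ i = (1 - q ^ n) / (1 - q) := by
      rw [geom_sum_eq (by linarith : q ≠ 1)]
      rw [div_eq_div_iff (by linarith) (by linarith)]
      ring
    rw [hgs, div_le_div_iff₀ (by linarith) (by linarith)]
    nlinarith [pow_pos hq0 n]
  have hB0 : 0 ≤ B := hBdef ▸ Real.exp_nonneg _
  -- Cauchy sequence
  have hcauchy : CauchySeq P := by
    apply cauchySeq_of_le_geometric q (2 * c * B) hq1
    intro n
    rw [dist_eq_norm, ← neg_sub, norm_neg, hstep n]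
    have : P n + (Λ (q ^ n * x) - 1) * P n - P n = (Λ (q ^ n * x) - 1) * P n := by abel
    rw [this]
    calc ‖(Λ (q ^ n * x) - 1) * P n‖ ≤ 2 * ‖Λ (q ^ n * x) - 1‖ * ‖P n‖ :=
          matrix_mul_norm_le _ _
      _ ≤ 2 * (c * q ^ n) * B := by
          have h2 := hΛn n
          have h3 := hPB n
          have h4 : (0:ℝ) ≤ ‖P n‖ := norm_nonneg _
          nlinarith [pow_pos hq0 n, norm_nonneg (Λ (q ^ n * x) - 1),
            mul_nonneg hc0 (pow_pos hq0 n).le]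
      _ = 2 * c * B * q ^ n := by ring
  exact cauchySeq_tendsto_of_complete hcauchy
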